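/- arXiv:2403.05967 — 3 statements merged into one kernel-verified Lean document; each statement's English description precedes it below -/
import Mathlib

section
/- Let H and K be two distinct subgroups of a discrete group G. Then, inside the reduced group C*-algebra C*_r(G), the Kadison-Kastler distance between the group *-algebras satisfies d_KK(ℂ[H], ℂ[K]) = 1, and consequently d_KK(C*_r(H), C*_r(K)) = 1. -/
/-!
If `g ∈ H \ K`, then `λ_g` lies in the unit ball of `ℂ[H]` and stays at distance at least `1` from
all of `ℂ[K]`: writing `λ_g - x = ∑ d_k λ_k` with `d_g = 1`, orthonormality of the `λ_k` for the
trace gives `‖λ_g - x‖² ≥ |τ((λ_g - x)^* (λ_g - x))| = ∑ |d_k|² ≥ 1`. This bound passes to the norm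
closure `C*_r(K)`. Conversely, every unit ball contains `0`, so no point of one of them is farther
than `1` from the other.
-/

open Metric Finsupp

/-- The Kadison-Kastler distance between two subsets of a normed algebra:
the Hausdorff distance between their closed unit balls. -/
noncomputable def dKK {A : Type*} [NormedRing A] (C D : Set A) : ℝ :=
  Metric.hausdorffDist (C ∩ Metric.closedBall 0 1) (D ∩ Metric.closedBall 0 1)

section KadisonKastler

variable {A : Type*} [NormedRing A] {S T : Set A}

theorem dKK_comm (S T : Set A) : dKK S T = dKK T S :=
  hausdorffDist_comm

theorem dKK_le_one (h0S : 0 ∈ S) (h0T : 0 ∈ T) : dKK S T ≤ 1 := by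
  refine hausdorffDist_le_of_mem_dist zero_le_one ?_ ?_
  · exact fun x hx => ⟨0, ⟨h0T, mem_closedBall_self zero_le_one⟩, hx.2⟩
  · exact fun y hy => ⟨0, ⟨h0S, mem_closedBall_self zero_le_one⟩, hy.2⟩

theorem one_le_dKK (h0T : 0 ∈ T) {p : A} (hpS : p ∈ S) (hp : ‖p‖ ≤ 1)
    (hfar : ∀ y ∈ T, 1 ≤ ‖p - y‖) : 1 ≤ dKK S T := by
  have hpS' : p ∈ S ∩ closedBall 0 1 := ⟨hpS, mem_closedBall_zero_iff.mpr hp⟩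
  have h0T' : (0 : A) ∈ T ∩ closedBall 0 1 := ⟨h0T, mem_closedBall_self zero_le_one⟩
  have hfin : hausdorffEDist (S ∩ closedBall 0 1) (T ∩ closedBall 0 1) ≠ ⊤ :=
    hausdorffEDist_ne_top_of_nonempty_of_bounded ⟨p, hpS'⟩ ⟨0, h0T'⟩
      (isBounded_closedBall.subset Set.inter_subset_right)
      (isBounded_closedBall.subset Set.inter_subset_right)
  calc (1 : ℝ) ≤ infDist p (T ∩ closedBall 0 1) :=
        (le_infDist ⟨0, h0T'⟩).mpr fun y hy => (hfar y hy.1).trans_eq (dist_eq_norm p y).symm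
    _ ≤ dKK S T := infDist_le_hausdorffDist_of_mem hpS' hfin

theorem dKK_eq_one (h0S : 0 ∈ S) (h0T : 0 ∈ T) {p : A} (hpS : p ∈ S) (hp : ‖p‖ ≤ 1)
    (hfar : ∀ y ∈ T, 1 ≤ ‖p - y‖) : dKK S T = 1 :=
  (dKK_le_one h0S h0T).antisymm (one_le_dKK h0T hpS hp hfar)

theorem dKK_closure_eq_one (h0S : 0 ∈ S) (h0T : 0 ∈ T) {p : A} (hpS : p ∈ S) (hp : ‖p‖ ≤ 1)
    (hfar : ∀ y ∈ T, 1 ≤ ‖p - y‖) : dKK (closure S) (closure T) = 1 := by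
  have hfar_closure : ∀ y ∈ closure T, 1 ≤ ‖p - y‖ :=
    fun y hy => closure_minimal hfar
      (isClosed_le continuous_const (continuous_const.sub continuous_id).norm) hy
  exact dKK_eq_one (subset_closure h0S) (subset_closure h0T) (subset_closure hpS) hp
    hfar_closure

end KadisonKastler

section Orthonormal

variable {ι : Type*} [DecidableEq ι]

theorem trace_star_linearCombination_mul_self {A : Type*} [Ring A] [StarRing A] [Algebra ℂ A]
    [StarModule ℂ A] (τ : A →ₗ[ℂ] ℂ) {v : ι → A}
    (hv : ∀ i j, τ (star (v i) * v j) = if i = j then 1 else 0) (c : ι →₀ ℂ) :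
    τ (star (linearCombination ℂ v c) * linearCombination ℂ v c) =
      ((∑ i ∈ c.support, ‖c i‖ ^ 2 : ℝ) : ℂ) := by
  simp only [linearCombination_apply, Finsupp.sum, star_sum, star_smul, Finset.sum_mul,
    Finset.mul_sum, smul_mul_assoc, mul_smul_comm, map_sum, map_smul, hv, smul_eq_mul,
    mul_ite, mul_one, mul_zero, Finset.sum_ite_eq']
  push_cast
  refine Finset.sum_congr rfl fun i hi => ?_
  rw [if_pos hi, Complex.star_def, Complex.mul_conj']

theorem norm_apply_le_norm_linearCombination {A : Type*} [NormedRing A] [StarRing A]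
    [NormedAlgebra ℂ A] [StarModule ℂ A] (τ : A →ₗ[ℂ] ℂ)
    (hτ : ∀ a : A, ‖τ (star a * a)‖ ≤ ‖a‖ ^ 2) {v : ι → A}
    (hv : ∀ i j, τ (star (v i) * v j) = if i = j then 1 else 0) (c : ι →₀ ℂ) (i : ι) :
    ‖c i‖ ≤ ‖linearCombination ℂ v c‖ := by
  have hsum : ‖c i‖ ^ 2 ≤ ∑ j ∈ c.support, ‖c j‖ ^ 2 := by
    by_cases hi : i ∈ c.support
    · exact Finset.single_le_sum (fun j _ => sq_nonneg ‖c j‖) hi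
    · rw [notMem_support_iff.mp hi, norm_zero, sq, zero_mul]
      exact Finset.sum_nonneg fun j _ => sq_nonneg ‖c j‖
  have hτ_sum := hτ (linearCombination ℂ v c)
  rw [trace_star_linearCombination_mul_self τ hv, Complex.norm_real, Real.norm_eq_abs,
    abs_of_nonneg (Finset.sum_nonneg fun j _ => sq_nonneg ‖c j‖)] at hτ_sum
  exact (pow_le_pow_iff_left₀ (norm_nonneg _) (norm_nonneg _) two_ne_zero).mp
    (hsum.trans hτ_sum)

end Orthonormal

theorem toSubmodule_adjoin_image_submonoid {R M A : Type*} [CommSemiring R] [Monoid M]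
    [Semiring A] [Algebra R A] (φ : M →* A) (S : Submonoid M) :
    Subalgebra.toSubmodule (Algebra.adjoin R (φ '' S)) = Submodule.span R (φ '' S) := by
  rw [Algebra.adjoin_eq_span, ← MonoidHom.map_mclosure, Submonoid.closure_eq,
    Submonoid.coe_map]

theorem one_le_norm_sub_of_mem_adjoin {G A : Type*} [Monoid G] [DecidableEq G] [NormedRing A]
    [StarRing A] [NormedAlgebra ℂ A] [StarModule ℂ A] (φ : G →* A) (τ : A →ₗ[ℂ] ℂ)
    (hτ : ∀ a : A, ‖τ (star a * a)‖ ≤ ‖a‖ ^ 2)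
    (hφ : ∀ g h, τ (star (φ g) * φ h) = if g = h then 1 else 0)
    {S : Submonoid G} {g : G} (hg : g ∉ S) {x : A} (hx : x ∈ Algebra.adjoin ℂ (φ '' S)) :
    1 ≤ ‖φ g - x‖ := by
  rw [← Subalgebra.mem_toSubmodule, toSubmodule_adjoin_image_submonoid,
    mem_span_image_iff_linearCombination] at hx
  obtain ⟨c, hcS, rfl⟩ := hx
  have hcg : (single g (1 : ℂ) - c) g = 1 := by
    rw [Finsupp.sub_apply, single_eq_same, (mem_supported' ℂ c).mp hcS g hg, sub_zero]
  have hsub : φ g - linearCombination ℂ φ c = linearCombination ℂ φ (single g 1 - c) := by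
    rw [map_sub, linearCombination_single, one_smul]
  calc (1 : ℝ) = ‖(single g (1 : ℂ) - c) g‖ := by rw [hcg, norm_one]
    _ ≤ ‖φ g - linearCombination ℂ φ c‖ :=
      hsub ▸ norm_apply_le_norm_linearCombination τ hτ hφ _ g

theorem stmt14_general {G A : Type*} [Group G] [DecidableEq G]
    [NormedRing A] [StarRing A] [NormedAlgebra ℂ A]
    [StarModule ℂ A]
    (lam : G → A)
    (hlam_mul : ∀ g h : G, lam (g * h) = lam g * lam h)
    (hlam_one : lam 1 = 1)
    (hlam_norm : ∀ g : G, ‖lam g‖ = 1)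
    (τ : A →ₗ[ℂ] ℂ)
    (hτ_state : ∀ a : A, ‖τ (star a * a)‖ ≤ ‖a‖ ^ 2)
    (hτ_orth : ∀ g h : G, τ (star (lam g) * lam h) = if g = h then 1 else 0)
    (H K : Subgroup G) (hHK : H ≠ K) :
    dKK (↑(Algebra.adjoin ℂ (lam '' (H : Set G))) : Set A)
        (↑(Algebra.adjoin ℂ (lam '' (K : Set G))) : Set A) = 1 ∧
    dKK (closure (↑(Algebra.adjoin ℂ (lam '' (H : Set G))) : Set A))
        (closure (↑(Algebra.adjoin ℂ (lam '' (K : Set G))) : Set A)) = 1 := by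
  wlog hHK' : ∃ g ∈ H, g ∉ K generalizing H K
  · have hHK_le : H ≤ K := fun g hgH => by_contra fun hgK => hHK' ⟨g, hgH, hgK⟩
    obtain ⟨g, hgK, hgH⟩ := SetLike.exists_of_lt (hHK_le.lt_of_ne hHK)
    rw [dKK_comm, dKK_comm (closure _)]
    exact this K H hHK.symm ⟨g, hgK, hgH⟩
  obtain ⟨g, hgH, hgK⟩ := hHK'
  let φ : G →* A := { toFun := lam, map_one' := hlam_one, map_mul' := hlam_mul }
  have h0 : ∀ L : Subgroup G, (0 : A) ∈ Algebra.adjoin ℂ (lam '' (L : Set G)) :=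
    fun L => zero_mem _
  have hgH' : lam g ∈ Algebra.adjoin ℂ (lam '' (H : Set G)) := Algebra.subset_adjoin ⟨g, hgH, rfl⟩
  have hfar : ∀ y ∈ Algebra.adjoin ℂ (lam '' (K : Set G)), 1 ≤ ‖lam g - y‖ :=
    fun y hy => one_le_norm_sub_of_mem_adjoin φ τ hτ_state hτ_orth (S := K.toSubmonoid) hgK hy
  exact ⟨dKK_eq_one (h0 H) (h0 K) hgH' (hlam_norm g).le hfar,
    dKK_closure_eq_one (h0 H) (h0 K) hgH' (hlam_norm g).le hfar⟩

/-- Let `H` and `K` be distinct subgroups of a discrete group `G`. Inside the reduced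
group C*-algebra `C*_r(G)` (presented abstractly as a C*-algebra `A` generated by
unitaries `λ_g` together with the canonical trace), the Kadison-Kastler distance
between the group `*`-algebras satisfies `d_KK(ℂ[H], ℂ[K]) = 1`, and consequently
`d_KK(C*_r(H), C*_r(K)) = 1`. -/
theorem stmt14 {G A : Type*} [Group G] [DecidableEq G]
    [NormedRing A] [StarRing A] [CStarRing A] [NormedAlgebra ℂ A]
    [StarModule ℂ A] [CompleteSpace A]
    (lam : G → A)
    (hlam_mul : ∀ g h : G, lam (g * h) = lam g * lam h)
    (hlam_one : lam 1 = 1)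
    (hlam_star : ∀ g : G, star (lam g) = lam g⁻¹)
    (hlam_norm : ∀ g : G, ‖lam g‖ = 1)
    (τ : A →ₗ[ℂ] ℂ)
    (hτ_state : ∀ a : A, ‖τ (star a * a)‖ ≤ ‖a‖ ^ 2)
    (hτ_orth : ∀ g h : G, τ (star (lam g) * lam h) = if g = h then 1 else 0)
    (H K : Subgroup G) (hHK : H ≠ K) :
    dKK (↑(Algebra.adjoin ℂ (lam '' (H : Set G))) : Set A)
        (↑(Algebra.adjoin ℂ (lam '' (K : Set G))) : Set A) = 1 ∧
    dKK (closure (↑(Algebra.adjoin ℂ (lam '' (H : Set G))) : Set A))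
        (closure (↑(Algebra.adjoin ℂ (lam '' (K : Set G))) : Set A)) = 1 :=
  stmt14_general lam hlam_mul hlam_one hlam_norm τ hτ_state hτ_orth H K hHK
end

section
/- Let H be a proper subgroup of a discrete group G, and suppose there exists g ∈ G \ H with g = g⁻¹ and g not in the centralizer of H in G. Then for every θ ∈ ℝ that is not an integer multiple of π/2, the unitary u_θ = cos(θ)λ_e + i sin(θ)λ_g does not normalize C*_r(H) inside C*_r(G), i.e., u_θ C*_r(H) u_θ* ≠ C*_r(H). -/
/-- Let `H` be a proper subgroup of a discrete group `G` and suppose there is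
`g ∈ G \ H` with `g = g⁻¹` which does not centralize `H`. Inside the reduced group
C*-algebra `C*_r(G)` (presented abstractly as a C*-algebra `A` generated by unitaries
`λ_g` with the canonical continuous trace `τ`), for every `θ ∈ ℝ` which is not an
integer multiple of `π/2`, the unitary `u_θ = cos θ · λ_e + i sin θ · λ_g` does not
normalize `C*_r(H)`: `u_θ C*_r(H) u_θ* ≠ C*_r(H)`. -/
theorem stmt17 {G A : Type*} [Group G] [DecidableEq G]
    [NormedRing A] [StarRing A] [CStarRing A] [NormedAlgebra ℂ A]
    [StarModule ℂ A] [CompleteSpace A]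
    (lam : G → A)
    (hlam_mul : ∀ g h : G, lam (g * h) = lam g * lam h)
    (hlam_one : lam 1 = 1)
    (hlam_star : ∀ g : G, star (lam g) = lam g⁻¹)
    (hlam_norm : ∀ g : G, ‖lam g‖ = 1)
    (τ : A →L[ℂ] ℂ)
    (hτ_orth : ∀ g h : G, τ (star (lam g) * lam h) = if g = h then 1 else 0)
    (H : Subgroup G) (hH_proper : H ≠ ⊤)
    (g : G) (hgH : g ∉ H) (hg : g * g = 1)
    (hg_cent : g ∉ Subgroup.centralizer (H : Set G)) :
    ∀ θ : ℝ, (∀ n : ℤ, θ ≠ n * (Real.pi / 2)) →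
      (fun x => ((Real.cos θ : ℂ) • (1 : A) + (Complex.I * Real.sin θ) • lam g) * x *
          star ((Real.cos θ : ℂ) • (1 : A) + (Complex.I * Real.sin θ) • lam g)) ''
          closure (↑(Algebra.adjoin ℂ (lam '' (H : Set G))) : Set A) ≠
        closure (↑(Algebra.adjoin ℂ (lam '' (H : Set G))) : Set A) := by
  intro θ hθ heq
  -- pick h₀ ∈ H not commuting with g
  rw [Subgroup.mem_centralizer_iff] at hg_cent
  push_neg at hg_cent
  obtain ⟨h₀, hh₀, hnc⟩ := hg_cent
  -- notation
  set c : ℂ := (Real.cos θ : ℂ) with hc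
  set s : ℂ := Complex.I * Real.sin θ with hs
  set u : A := c • (1 : A) + s • lam g with hu
  -- sin θ ≠ 0 and cos θ ≠ 0
  have hsin : Real.sin θ ≠ 0 := by
    intro h
    rw [Real.sin_eq_zero_iff] at h
    obtain ⟨n, hn⟩ := h
    exact hθ (2 * n) (by push_cast; rw [← hn]; ring)
  have hcos : Real.cos θ ≠ 0 := by
    intro h
    rw [Real.cos_eq_zero_iff] at h
    obtain ⟨n, hn⟩ := h
    exact hθ (2 * n + 1) (by push_cast; rw [hn]; ring)
  have hcC : c ≠ 0 := Complex.ofReal_ne_zero.mpr hcos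
  have hsC : s ≠ 0 := mul_ne_zero Complex.I_ne_zero (Complex.ofReal_ne_zero.mpr hsin)
  -- g⁻¹ = g
  have hginv : g⁻¹ = g := inv_eq_of_mul_eq_one_right hg
  -- g * h₀ ∉ H
  have hghH : g * h₀ ∉ H := fun hmem => hgH (by
    have := H.mul_mem hmem (H.inv_mem hh₀)
    simpa [mul_assoc] using this)
  -- the functional x ↦ τ (star (lam (g*h₀)) * x) vanishes on the closure of the adjoin
  have hvan : ∀ x ∈ closure (↑(Algebra.adjoin ℂ (lam '' (H : Set G))) : Set A),
      τ (star (lam (g * h₀)) * x) = 0 := by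
    have hcl : IsClosed {x : A | τ (star (lam (g * h₀)) * x) = 0} := by
      have hcont : Continuous fun x : A => τ (star (lam (g * h₀)) * x) :=
        τ.continuous.comp (continuous_const.mul continuous_id)
      exact isClosed_eq hcont continuous_const
    have hsub : (↑(Algebra.adjoin ℂ (lam '' (H : Set G))) : Set A) ⊆
        {x : A | τ (star (lam (g * h₀)) * x) = 0} := by
      intro x hx
      have hx' : x ∈ Submodule.span ℂ (↑(Submonoid.closure (lam '' (H : Set G))) : Set A) := by
        rw [← Algebra.adjoin_eq_span]; exact hx
      -- the submonoid generated by lam '' H is lam '' H itself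
      let M : Submonoid A :=
        { carrier := lam '' (H : Set G)
          one_mem' := ⟨1, H.one_mem, hlam_one⟩
          mul_mem' := by
            rintro _ _ ⟨a, ha, rfl⟩ ⟨b, hb, rfl⟩
            exact ⟨a * b, H.mul_mem ha hb, hlam_mul a b⟩ }
      have hMle : Submonoid.closure (lam '' (H : Set G)) ≤ M :=
        Submonoid.closure_le.mpr (le_refl _)
      refine Submodule.span_induction ?_ ?_ ?_ ?_ hx'
      · rintro y hy
        obtain ⟨k, hk, rfl⟩ := hMle hy
        simp only [Set.mem_setOf_eq, hτ_orth]
        rw [if_neg]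
        rintro rfl
        exact hghH hk
      · simp
      · intro a b _ _ ha hb
        simp only [Set.mem_setOf_eq] at *
        rw [mul_add, map_add, ha, hb, add_zero]
      · intro r a _ ha
        simp only [Set.mem_setOf_eq] at *
        rw [mul_smul_comm, map_smul, ha, smul_zero]
    exact fun x hx => closure_minimal hsub hcl hx
  -- star u
  have hstaru : star u = c • (1 : A) + (-s) • lam g := by
    rw [hu, star_add, star_smul, star_smul, star_one, hlam_star, hginv]
    congr 1
    · congr 1
      exact Complex.conj_ofReal _
    · congr 1
      simp [hs, Complex.ext_iff]
  -- key algebraic computation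
  have key : u * lam h₀ * star u =
      (c * c) • lam h₀ + (c * (-s)) • lam (h₀ * g) + (s * c) • lam (g * h₀)
        + (s * (-s)) • lam (g * h₀ * g) := by
    rw [hstaru, hu]
    simp only [hlam_mul, add_mul, mul_add, smul_mul_assoc, mul_smul_comm, one_mul, mul_one,
      smul_smul]
    module
  -- u lamh₀ u* lies in the closure of the adjoin
  have hmem : u * lam h₀ * star u ∈ closure (↑(Algebra.adjoin ℂ (lam '' (H : Set G))) : Set A) := by
    rw [← heq]
    exact ⟨lam h₀, subset_closure (Algebra.subset_adjoin ⟨h₀, hh₀, rfl⟩), rfl⟩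
  have hne1 : g * h₀ ≠ h₀ := by
    intro h
    have hg1 : g = 1 := mul_right_cancel (b := h₀) (by rw [one_mul]; exact h)
    exact hgH (hg1 ▸ H.one_mem)
  have hne2 : g * h₀ ≠ h₀ * g := fun h => hnc h.symm
  have hne3 : g * h₀ ≠ g * h₀ * g := by
    intro h
    have hg1 : (1 : G) = g := mul_left_cancel (a := g * h₀) (by rw [mul_one]; exact h)
    exact hgH (hg1 ▸ H.one_mem)
  have h0 := hvan _ hmem
  rw [key] at h0
  simp only [mul_add, map_add, mul_smul_comm, map_smul, hτ_orth, if_pos rfl, if_neg hne1,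
    if_neg hne2, if_neg hne3, smul_zero, add_zero, zero_add, smul_eq_mul, mul_one, if_true,
    mul_zero] at h0
  exact mul_ne_zero hsC hcC h0
end

section
/- Let H and K be two distinct nontrivial subgroups of a discrete group G. Then in the group von Neumann algebra L(G) with its canonical trace τ, the Mashood-Taylor distance satisfies d_MT(ℂ[H], ℂ[K]) = 1, and consequently d_MT(L(H), L(K)) = 1. -/
/-!
Pick `h ∈ H \ K` (or swap the roles of `H` and `K`). The closed span `ℓ²(K)` of the orbit
`{λ_k δ_e | k ∈ K}` is invariant under the unitaries `λ_k` and their adjoints, so its orthogonal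
projection lies in `ℂ[K]'`; hence every `x ∈ ℂ[K]''` maps `δ_e ∈ ℓ²(K)` into `ℓ²(K)`. But
`λ_h δ_e` is a unit vector orthogonal to `ℓ²(K)`, so it stays at distance at least `1` from the
image of the unit ball of `ℂ[K]''`. Conversely all images of unit balls lie in the unit ball
of `ℓ²(G)` and contain `0`, so no Hausdorff distance exceeds `1`.
-/

/-- The Mashood-Taylor distance between two sets of operators: the Hausdorff distance,
in `L²`-norm (computed via the trace vector `ξ`), between the images of their
operator-norm closed unit balls. -/
noncomputable def dMT {𝓗 : Type*} [NormedAddCommGroup 𝓗] [InnerProductSpace ℂ 𝓗]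
    (ξ : 𝓗) (P Q : Set (𝓗 →L[ℂ] 𝓗)) : ℝ :=
  Metric.hausdorffDist
    ((fun x : 𝓗 →L[ℂ] 𝓗 => x ξ) '' (P ∩ Metric.closedBall 0 1))
    ((fun x : 𝓗 →L[ℂ] 𝓗 => x ξ) '' (Q ∩ Metric.closedBall 0 1))

open Submodule

section Projection

variable {𝕜 E : Type*} [RCLike 𝕜] [NormedAddCommGroup E] [InnerProductSpace 𝕜 E]

lemma Submodule.commute_starProjection [CompleteSpace E] (K : Submodule 𝕜 E)
    [K.HasOrthogonalProjection] {A : E →L[𝕜] E} (hA : Set.MapsTo A K K)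
    (hA' : Set.MapsTo (ContinuousLinearMap.adjoint A) K K) : Commute A K.starProjection := by
  refine ContinuousLinearMap.ext fun v => ?_
  rw [mul_apply_eq_comp, mul_apply_eq_comp]
  refine (eq_starProjection_of_mem_of_inner_eq_zero (hA (K.starProjection_apply_mem v))
    fun w hw => ?_).symm
  rw [← map_sub, ← ContinuousLinearMap.adjoint_inner_right]
  exact K.starProjection_inner_eq_zero v _ (hA' hw)

lemma Submodule.mapsTo_of_commute_starProjection (K : Submodule 𝕜 E) [K.HasOrthogonalProjection]
    {x : E →L[𝕜] E} (hx : Commute x K.starProjection) : Set.MapsTo x K K := fun v hv => by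
  rw [← starProjection_eq_self_iff.2 hv, ← mul_apply_eq_comp, hx.eq]
  exact K.starProjection_apply_mem _

lemma norm_le_norm_sub_of_mem_orthogonal {K : Submodule 𝕜 E} {v w : E} (hv : v ∈ Kᗮ)
    (hw : w ∈ K) : ‖v‖ ≤ ‖v - w‖ := by
  have hvw : inner 𝕜 v (-w) = 0 := by
    rw [inner_neg_right, inner_eq_zero_symm.1 (K.inner_right_of_mem_orthogonal hw hv), neg_zero]
  have hsq := norm_add_sq_eq_norm_sq_add_norm_sq_of_inner_eq_zero v (-w) hvw
  rw [← sub_eq_add_neg] at hsq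
  nlinarith [norm_nonneg v, norm_nonneg (v - w), sq_nonneg ‖-w‖]

end Projection

lemma Submodule.mapsTo_topologicalClosure_span {R M : Type*} [Semiring R] [AddCommMonoid M]
    [Module R M] [TopologicalSpace M] [ContinuousAdd M] [ContinuousConstSMul R M]
    {T : M →L[R] M} {S : Set M} (hT : Set.MapsTo T S S) :
    Set.MapsTo T (span R S).topologicalClosure (span R S).topologicalClosure := by
  have hS : span R S ≤ (span R S).topologicalClosure.comap (T : M →ₗ[R] M) :=
    span_le.2 fun v hv => le_topologicalClosure _ (subset_span (hT hv))
  exact fun v hv => topologicalClosure_minimal _ hS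
    ((isClosed_topologicalClosure _).preimage T.continuous) hv

lemma Metric.hausdorffDist_eq_of_subset_closedBall {E : Type*} [SeminormedAddCommGroup E]
    {s t : Set E} {r : ℝ} (hs : s ⊆ closedBall 0 r) (ht : t ⊆ closedBall 0 r)
    (h0s : 0 ∈ s) (h0t : 0 ∈ t) {v : E} (hv : v ∈ s) (hvt : ∀ y ∈ t, r ≤ dist v y) :
    hausdorffDist s t = r := by
  have hr : 0 ≤ r := by simpa using hs h0s
  have hfin : hausdorffEDist s t ≠ ⊤ :=
    hausdorffEDist_ne_top_of_nonempty_of_bounded ⟨0, h0s⟩ ⟨0, h0t⟩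
      (isBounded_closedBall.subset hs) (isBounded_closedBall.subset ht)
  refine le_antisymm (hausdorffDist_le_of_mem_dist hr ?_ ?_) ?_
  · exact fun x hx => ⟨0, h0t, by simpa using hs hx⟩
  · exact fun x hx => ⟨0, h0s, by simpa using ht hx⟩
  · exact ((le_infDist ⟨0, h0t⟩).2 hvt).trans (infDist_le_hausdorffDist_of_mem hv hfin)

lemma dMT_comm {𝓗 : Type*} [NormedAddCommGroup 𝓗] [InnerProductSpace ℂ 𝓗] (ξ : 𝓗)
    (P Q : Set (𝓗 →L[ℂ] 𝓗)) : dMT ξ P Q = dMT ξ Q P :=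
  Metric.hausdorffDist_comm

lemma dMT_eq_one_of_mem_orthogonal {𝓗 : Type*} [NormedAddCommGroup 𝓗] [InnerProductSpace ℂ 𝓗]
    {ξ : 𝓗} (hξ : ‖ξ‖ ≤ 1) {P Q : Set (𝓗 →L[ℂ] 𝓗)} (h0P : 0 ∈ P) (h0Q : 0 ∈ Q)
    {a : 𝓗 →L[ℂ] 𝓗} (haP : a ∈ P) (ha : ‖a‖ ≤ 1) (haξ : ‖a ξ‖ = 1) {E : Submodule ℂ 𝓗}
    (haE : a ξ ∈ Eᗮ) (hQ : ∀ x ∈ Q, x ξ ∈ E) : dMT ξ P Q = 1 := by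
  have hball : ∀ S : Set (𝓗 →L[ℂ] 𝓗), (fun x : 𝓗 →L[ℂ] 𝓗 => x ξ) '' (S ∩ Metric.closedBall 0 1)
      ⊆ Metric.closedBall 0 1 := by
    rintro S _ ⟨x, ⟨-, hx⟩, rfl⟩
    rw [mem_closedBall_zero_iff] at hx ⊢
    exact (x.le_of_opNorm_le hx ξ).trans (by simpa using hξ)
  refine Metric.hausdorffDist_eq_of_subset_closedBall (hball P) (hball Q)
    ⟨0, ⟨h0P, by simp⟩, rfl⟩ ⟨0, ⟨h0Q, by simp⟩, rfl⟩
    ⟨a, ⟨haP, mem_closedBall_zero_iff.2 ha⟩, rfl⟩ ?_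
  rintro _ ⟨x, ⟨hxQ, -⟩, rfl⟩
  rw [dist_eq_norm, ← haξ]
  exact norm_le_norm_sub_of_mem_orthogonal haE (hQ x hxQ)

section RegularRepresentation

variable {G 𝓗 : Type*} [Group G] [NormedAddCommGroup 𝓗] [InnerProductSpace ℂ 𝓗]

/-- For `ξ = δ_e` this is `ℓ²(K) ⊆ ℓ²(G)`. -/
abbrev orbitSpan (lam : G → (𝓗 →L[ℂ] 𝓗)) (ξ : 𝓗) (K : Subgroup G) : Submodule ℂ 𝓗 :=
  (span ℂ ((fun g => lam g ξ) '' (K : Set G))).topologicalClosure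

lemma mapsTo_orbitSpan {lam : G → (𝓗 →L[ℂ] 𝓗)} (hlam_mul : ∀ g h, lam (g * h) = lam g * lam h)
    (ξ : 𝓗) {K : Subgroup G} {k : G} (hk : k ∈ K) :
    Set.MapsTo (lam k) (orbitSpan lam ξ K) (orbitSpan lam ξ K) :=
  mapsTo_topologicalClosure_span <| by
    rintro _ ⟨g, hg, rfl⟩
    exact ⟨k * g, K.mul_mem hk hg, by simp [hlam_mul]⟩

lemma mem_orthogonal_orbitSpan {lam : G → (𝓗 →L[ℂ] 𝓗)} {ξ : 𝓗}
    (hon : Orthonormal ℂ fun g => lam g ξ) {K : Subgroup G} {h : G} (hhK : h ∉ K) :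
    lam h ξ ∈ (orbitSpan lam ξ K)ᗮ := by
  rw [orthogonal_closure]
  refine isOrtho_iff_le.1 (isOrtho_span.2 ?_) (mem_span_singleton_self _)
  rintro _ rfl _ ⟨k, hk, rfl⟩
  exact hon.2 (ne_of_mem_of_not_mem hk hhK).symm

variable [CompleteSpace 𝓗]

lemma starProjection_orbitSpan_mem_centralizer {lam : G → (𝓗 →L[ℂ] 𝓗)}
    (hlam_mul : ∀ g h, lam (g * h) = lam g * lam h)
    (hlam_adj : ∀ g, ContinuousLinearMap.adjoint (lam g) = lam g⁻¹) (ξ : 𝓗) (K : Subgroup G) :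
    (orbitSpan lam ξ K).starProjection ∈
      Set.centralizer (Algebra.adjoin ℂ (lam '' (K : Set G)) : Set (𝓗 →L[ℂ] 𝓗)) := by
  have hgen : (orbitSpan lam ξ K).starProjection ∈ Set.centralizer (lam '' (K : Set G)) := by
    rintro _ ⟨k, hk, rfl⟩
    refine (commute_starProjection _ (mapsTo_orbitSpan hlam_mul ξ hk) ?_).eq
    rw [hlam_adj]
    exact mapsTo_orbitSpan hlam_mul ξ (K.inv_mem hk)
  exact fun y hy => (Algebra.adjoin_le_centralizer_centralizer ℂ _ hy _ hgen).symm

lemma apply_mem_orbitSpan_of_mem_bicommutant {lam : G → (𝓗 →L[ℂ] 𝓗)}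
    (hlam_mul : ∀ g h, lam (g * h) = lam g * lam h) (hlam_one : lam 1 = 1)
    (hlam_adj : ∀ g, ContinuousLinearMap.adjoint (lam g) = lam g⁻¹) (ξ : 𝓗) (K : Subgroup G)
    {x : 𝓗 →L[ℂ] 𝓗} (hx : x ∈ Set.centralizer (Set.centralizer
      (Algebra.adjoin ℂ (lam '' (K : Set G)) : Set (𝓗 →L[ℂ] 𝓗)))) :
    x ξ ∈ orbitSpan lam ξ K := by
  refine mapsTo_of_commute_starProjection _
    (hx _ (starProjection_orbitSpan_mem_centralizer hlam_mul hlam_adj ξ K)).symm ?_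
  exact le_topologicalClosure _ (subset_span ⟨1, K.one_mem, by simp [hlam_one]⟩)

end RegularRepresentation

lemma dMT_adjoin_eq_one_of_not_le {G 𝓗 : Type*} [Group G] [NormedAddCommGroup 𝓗]
    [InnerProductSpace ℂ 𝓗] [CompleteSpace 𝓗] {lam : G → (𝓗 →L[ℂ] 𝓗)} {ξ : 𝓗}
    (hlam_mul : ∀ g h, lam (g * h) = lam g * lam h) (hlam_one : lam 1 = 1)
    (hlam_adj : ∀ g, ContinuousLinearMap.adjoint (lam g) = lam g⁻¹)
    (hlam_norm : ∀ g, ‖lam g‖ = 1) (hon : Orthonormal ℂ fun g => lam g ξ)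
    {H K : Subgroup G} (hHK : ¬H ≤ K) :
    dMT ξ (Algebra.adjoin ℂ (lam '' (H : Set G)) : Set (𝓗 →L[ℂ] 𝓗))
        (Algebra.adjoin ℂ (lam '' (K : Set G)) : Set (𝓗 →L[ℂ] 𝓗)) = 1 ∧
    dMT ξ (Set.centralizer (Set.centralizer (Algebra.adjoin ℂ (lam '' (H : Set G)) : Set _)))
        (Set.centralizer (Set.centralizer (Algebra.adjoin ℂ (lam '' (K : Set G)) : Set _))) = 1 := by
  obtain ⟨h, hhH, hhK⟩ := SetLike.not_le_iff_exists.1 hHK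
  have hξ : ‖ξ‖ = 1 := by simpa [hlam_one] using hon.1 1
  have hlam_h : lam h ∈ Algebra.adjoin ℂ (lam '' (H : Set G)) := Algebra.subset_adjoin ⟨h, hhH, rfl⟩
  have key : ∀ {P Q : Set (𝓗 →L[ℂ] 𝓗)}, 0 ∈ P → 0 ∈ Q → lam h ∈ P →
      Q ⊆ Set.centralizer (Set.centralizer (Algebra.adjoin ℂ (lam '' (K : Set G)) : Set _)) →
      dMT ξ P Q = 1 := fun h0P h0Q hhP hQ =>
    dMT_eq_one_of_mem_orthogonal hξ.le h0P h0Q hhP (hlam_norm h).le (hon.1 h)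
      (mem_orthogonal_orbitSpan hon hhK)
      fun _ hx => apply_mem_orbitSpan_of_mem_bicommutant hlam_mul hlam_one hlam_adj ξ K (hQ hx)
  exact ⟨key (zero_mem _) (zero_mem _) hlam_h Set.subset_centralizer_centralizer,
    key Set.zero_mem_centralizer Set.zero_mem_centralizer
      (Set.subset_centralizer_centralizer hlam_h) le_rfl⟩

theorem stmt18_general {G 𝓗 : Type*} [Group G] [DecidableEq G]
    [NormedAddCommGroup 𝓗] [InnerProductSpace ℂ 𝓗] [CompleteSpace 𝓗]
    (lam : G → (𝓗 →L[ℂ] 𝓗)) (ξ : 𝓗)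
    (hlam_mul : ∀ g h : G, lam (g * h) = lam g * lam h)
    (hlam_one : lam 1 = 1)
    (hlam_adj : ∀ g : G, ContinuousLinearMap.adjoint (lam g) = lam g⁻¹)
    (hlam_norm : ∀ g : G, ‖lam g‖ = 1)
    -- orthonormality of the vectors `λ_g ξ` (so `ξ` plays the role of `δ_e`
    -- and `x ↦ ⟪x ξ, ξ⟫` is the canonical trace)
    (horth : ∀ g h : G, (inner ℂ (lam g ξ) (lam h ξ) : ℂ) = if g = h then 1 else 0)
    (H K : Subgroup G) (hHK : H ≠ K) :
    dMT ξ (↑(Algebra.adjoin ℂ (lam '' (H : Set G))) : Set (𝓗 →L[ℂ] 𝓗))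
        (↑(Algebra.adjoin ℂ (lam '' (K : Set G))) : Set (𝓗 →L[ℂ] 𝓗)) = 1 ∧
    dMT ξ
        (Set.centralizer (Set.centralizer
          (↑(Algebra.adjoin ℂ (lam '' (H : Set G))) : Set (𝓗 →L[ℂ] 𝓗))))
        (Set.centralizer (Set.centralizer
          (↑(Algebra.adjoin ℂ (lam '' (K : Set G))) : Set (𝓗 →L[ℂ] 𝓗)))) = 1 := by
  have hon : Orthonormal ℂ fun g => lam g ξ := orthonormal_iff_ite.2 horth
  by_cases hHK' : H ≤ K
  · have hKH : ¬K ≤ H := fun hKH => hHK (le_antisymm hHK' hKH)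
    rw [dMT_comm, dMT_comm ξ (Set.centralizer _)]
    exact dMT_adjoin_eq_one_of_not_le hlam_mul hlam_one hlam_adj hlam_norm hon hKH
  · exact dMT_adjoin_eq_one_of_not_le hlam_mul hlam_one hlam_adj hlam_norm hon hHK'

/-- Let `H` and `K` be distinct nontrivial subgroups of a discrete group `G`. In the
group von Neumann algebra `L(G)` (presented as the algebra generated by the unitaries
`λ_g` of the left regular representation on `ℓ²(G)`, with trace vector `ξ = δ_e`),
the Mashood-Taylor distance satisfies `d_MT(ℂ[H], ℂ[K]) = 1`, and consequently
`d_MT(L(H), L(K)) = 1` where `L(H) = ℂ[H]''`. -/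
theorem stmt18 {G 𝓗 : Type*} [Group G] [DecidableEq G]
    [NormedAddCommGroup 𝓗] [InnerProductSpace ℂ 𝓗] [CompleteSpace 𝓗]
    (lam : G → (𝓗 →L[ℂ] 𝓗)) (ξ : 𝓗)
    (hlam_mul : ∀ g h : G, lam (g * h) = lam g * lam h)
    (hlam_one : lam 1 = 1)
    (hlam_adj : ∀ g : G, ContinuousLinearMap.adjoint (lam g) = lam g⁻¹)
    (hlam_norm : ∀ g : G, ‖lam g‖ = 1)
    -- orthonormality of the vectors `λ_g ξ` (so `ξ` plays the role of `δ_e`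
    -- and `x ↦ ⟪x ξ, ξ⟫` is the canonical trace)
    (horth : ∀ g h : G, (inner ℂ (lam g ξ) (lam h ξ) : ℂ) = if g = h then 1 else 0)
    (H K : Subgroup G) (hHK : H ≠ K) (hH : H ≠ ⊥) (hK : K ≠ ⊥) :
    dMT ξ (↑(Algebra.adjoin ℂ (lam '' (H : Set G))) : Set (𝓗 →L[ℂ] 𝓗))
        (↑(Algebra.adjoin ℂ (lam '' (K : Set G))) : Set (𝓗 →L[ℂ] 𝓗)) = 1 ∧
    dMT ξ
        (Set.centralizer (Set.centralizer
          (↑(Algebra.adjoin ℂ (lam '' (H : Set G))) : Set (𝓗 →L[ℂ] 𝓗))))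
        (Set.centralizer (Set.centralizer
          (↑(Algebra.adjoin ℂ (lam '' (K : Set G))) : Set (𝓗 →L[ℂ] 𝓗)))) = 1 :=
  stmt18_general lam ξ hlam_mul hlam_one hlam_adj hlam_norm horth H K hHK
end
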